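/- arXiv:1609.02527 — 5 statements merged into one kernel-verified Lean document; each statement's English description precedes it below -/
import Mathlib

section
/- Spectral gap for the Kawasaki dynamics in finite volume: There exists a constant C_K(d) < ∞ such that for every ρ ∈ [0,1], every integer ℓ ≥ 1 and every function f : {0,1}^{B_ℓ} → ℝ, one has ⟨(f − ⟨f⟩_{ℓ,ρ})²⟩_{ℓ,ρ} ≤ C_K ℓ² Σ_{e ∈ 𝔹_ℓ} ⟨(f(η^e) − f(η))²⟩_{ℓ,ρ}. -/
open Finset

noncomputable section

/-- The box `B_ℓ = {−ℓ,…,ℓ}^d` in `ℤ^d`. -/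
def Box (d ℓ : ℕ) : Finset (Fin d → ℤ) :=
  Finset.Icc (fun _ => -(ℓ : ℤ)) (fun _ => (ℓ : ℤ))

/-- A site of the box `B_ℓ`. -/
abbrev Site (d ℓ : ℕ) := {x : Fin d → ℤ // x ∈ Box d ℓ}

/-- A particle configuration `η ∈ {0,1}^{B_ℓ}`. -/
abbrev Config (d ℓ : ℕ) := Site d ℓ → Bool

/-- Two sites are neighbours when their Euclidean distance is `1`. -/
abbrev SiteAdj {d ℓ : ℕ} (y z : Site d ℓ) : Prop :=
  (∑ i, ((y : Fin d → ℤ) i - (z : Fin d → ℤ) i) ^ 2) = 1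

/-- Number of particles of a configuration. -/
def numParticles {d ℓ : ℕ} (η : Config d ℓ) : ℕ :=
  (Finset.univ.filter fun z => η z = true).card

open scoped Classical in
/-- The set of configurations with exactly `⌊ρ |B_ℓ|⌋` particles. -/
def kawasakiSlice (d ℓ : ℕ) (ρ : ℝ) : Finset (Config d ℓ) :=
  Finset.univ.filter fun η => (numParticles η : ℤ) = ⌊ρ * ((Box d ℓ).card : ℝ)⌋

/-- Expectation with respect to the uniform probability measure `⟨·⟩_{ℓ,ρ}` on the set of
configurations with exactly `⌊ρ |B_ℓ|⌋` particles. -/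
def kawasakiExp (d ℓ : ℕ) (ρ : ℝ) (g : Config d ℓ → ℝ) : ℝ :=
  (∑ η ∈ kawasakiSlice d ℓ ρ, g η) / ((kawasakiSlice d ℓ ρ).card : ℝ)

/-- The configuration `η^e` obtained from `η` by exchanging the states of the two
endpoints of the edge `e = {y,z}`. -/
def exch {d ℓ : ℕ} (y z : Site d ℓ) (η : Config d ℓ) : Config d ℓ :=
  η ∘ Equiv.swap y z

/-!
Write `E(σ) = ∑_η (g (η ∘ σ) - g η)²` for the energy of a permutation `σ` of the sites.
On the slice of configurations with `k` particles among `n` sites, let `L` add and `R` remove a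
particle (summing over sites). They are adjoint, `R L = N + A` and `L R = (n - N) + A` with `A`
the sum over particle-hole exchanges, so `[L, R] = n - 2N`; by induction on `k` this gives
`‖L g‖² ≤ (k - 1) (n - k) ‖g‖²` for `g` on the slice with mean zero, which is exactly the
Bernoulli–Laplace bound `4 n ‖g‖² ≤ ∑_{x,y} E(x y)` for the exchange energies on the complete
graph.

A transposition `(x y)` is the palindromic product of the nearest-neighbour transpositions along
the lattice path from `x` to `y` that corrects one coordinate after the other; the path has at most
`2 d ℓ` steps, so Cauchy–Schwarz gives `E(x y) ≤ 8 d ℓ ∑_{steps} E(e)`. A nearest-neighbour edge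
occurs in at most `(2ℓ+1)^(d+1)` of these paths, and `n = (2ℓ+1)^d`, hence
`‖g‖² ≤ 2 d ℓ (2ℓ + 1) ∑_e E(e) ≤ 6 d ℓ² ∑_e E(e)`.
-/

namespace Kawasaki

open Function hiding swap
open Equiv

section Configurations

variable {α : Type*} [Fintype α]

def particleCount (η : α → Bool) : ℕ :=
  (univ.filter fun z => η z = true).card

def OnSlice (k : ℕ) (g : (α → Bool) → ℝ) : Prop :=
  ∀ η, particleCount η ≠ k → g η = 0

lemma particleCount_comp_perm (η : α → Bool) (σ : Perm α) :
    particleCount (η ∘ σ) = particleCount η := by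
  unfold particleCount
  exact card_bij (fun z _ => σ z) (by simp) (fun _ _ _ _ h => σ.injective h)
    (fun z hz => ⟨σ.symm z, by simpa using hz, by simp⟩)

lemma particleCount_le_card (η : α → Bool) : particleCount η ≤ Fintype.card α :=
  card_filter_le _ _

lemma sum_ite_true (η : α → Bool) :
    ∑ x, (if η x then (1 : ℝ) else 0) = particleCount η := by
  simp [particleCount, sum_boole]

lemma sum_ite_false (η : α → Bool) :
    ∑ x, (if η x then (0 : ℝ) else 1) = Fintype.card α - particleCount η := by
  rw [← sum_ite_true, ← card_univ, cast_card, ← sum_sub_distrib]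
  exact sum_congr rfl fun x _ => by cases η x <;> simp

lemma OnSlice.eq_zero_of_card_lt {k : ℕ} {g : (α → Bool) → ℝ} (hg : OnSlice k g)
    (hk : Fintype.card α < k) : g = 0 :=
  funext fun η => hg η fun h => (particleCount_le_card η).not_gt (h ▸ hk)

variable [DecidableEq α]

lemma sum_comp_perm (σ : Perm α) (F : (α → Bool) → ℝ) :
    ∑ η, F (η ∘ σ) = ∑ η, F η :=
  (σ.symm.arrowCongr (Equiv.refl Bool)).sum_comp F

lemma sum_flip (x : α) (F : (α → Bool) → ℝ) :
    ∑ η, F (update η x (!η x)) = ∑ η, F η := by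
  have hinv : Involutive fun η : α → Bool => update η x (!η x) := by
    intro η
    ext z
    rcases eq_or_ne z x with rfl | hz <;> simp [update_of_ne, *]
  exact Equiv.sum_comp (hinv.toPerm _) F

lemma particleCount_update_true {η : α → Bool} {x : α} (hx : η x = false) :
    particleCount (update η x true) = particleCount η + 1 := by
  unfold particleCount
  rw [← card_insert_of_notMem (s := univ.filter fun z => η z = true) (a := x) (by simp [hx])]
  congr 1
  ext z
  rcases eq_or_ne z x with rfl | hz <;> simp [update_of_ne, *]

lemma OnSlice.sum_count_mul {k : ℕ} {g : (α → Bool) → ℝ} (hg : OnSlice k g) (c : ℕ → ℝ)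
    (h : (α → Bool) → ℝ) :
    ∑ η, c (particleCount η) * g η * h η = c k * (g ⬝ᵥ h) := by
  rw [dotProduct, mul_sum]
  refine sum_congr rfl fun η _ => ?_
  by_cases hη : particleCount η = k
  · rw [hη, mul_assoc]
  · simp [hg η hη]

lemma OnSlice.eq_zero_of_sum_eq_zero {g : (α → Bool) → ℝ} (hg : OnSlice 0 g)
    (hs : ∑ η, g η = 0) : g = 0 := by
  have hempty : ∀ η : α → Bool, particleCount η = 0 ↔ η = fun _ => false := by
    simp [particleCount, funext_iff]
  have hsum : ∑ η, g η = g fun _ => false :=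
    sum_eq_single _ (fun η _ hη => hg η fun h => hη ((hempty η).1 h)) (by simp)
  funext η
  by_cases hη : η = fun _ => false
  · rw [hη, ← hsum, hs, Pi.zero_apply]
  · exact hg η fun h => hη ((hempty η).1 h)

def energy (g : (α → Bool) → ℝ) (σ : Perm α) : ℝ :=
  ∑ η, (g (η ∘ σ) - g η) ^ 2

lemma energy_nonneg (g : (α → Bool) → ℝ) (σ : Perm α) : 0 ≤ energy g σ :=
  sum_nonneg fun _ _ => sq_nonneg _

lemma energy_one (g : (α → Bool) → ℝ) : energy g 1 = 0 := by
  simp [energy]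

lemma energy_eq (g : (α → Bool) → ℝ) (σ : Perm α) :
    energy g σ = 2 * (g ⬝ᵥ g) - 2 * ∑ η, g (η ∘ σ) * g η := by
  calc energy g σ = ∑ η, g (η ∘ σ) * g (η ∘ σ) + g ⬝ᵥ g - 2 * ∑ η, g (η ∘ σ) * g η := by
        simp only [energy, dotProduct, mul_sum, ← sum_add_distrib,
          ← sum_sub_distrib]
        exact sum_congr rfl fun η _ => by ring
    _ = _ := by rw [sum_comp_perm σ fun η => g η * g η]; unfold dotProduct; ring

end Configurations

section LadderOperators

variable {α : Type*} [DecidableEq α]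

lemma comp_swap_eq_update {η : α → Bool} {x y : α} (hx : η x = false) (hy : η y = true) :
    η ∘ swap x y = update (update η y false) x true := by
  ext z
  rcases eq_or_ne z x with rfl | hzx
  · simp [hy]
  rcases eq_or_ne z y with rfl | hzy
  · simp [hx, hzx]
  · simp [swap_apply_of_ne_of_ne, update_of_ne, *]

lemma comp_swap_of_eq {η : α → Bool} {x y : α} (h : η x = η y) : η ∘ swap x y = η := by
  ext z
  rcases eq_or_ne z x with rfl | hzx
  · simp [h]
  rcases eq_or_ne z y with rfl | hzy
  · simp [h]
  · simp [swap_apply_of_ne_of_ne, *]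

variable [Fintype α]

def addParticleSum (g : (α → Bool) → ℝ) (η : α → Bool) : ℝ :=
  ∑ x, if η x then 0 else g (update η x true)

def removeParticleSum (g : (α → Bool) → ℝ) (η : α → Bool) : ℝ :=
  ∑ x, if η x then g (update η x false) else 0

def exchangeSum (g : (α → Bool) → ℝ) (η : α → Bool) : ℝ :=
  ∑ y, ∑ x, if η x = false ∧ η y = true then g (η ∘ swap x y) else 0

lemma removeParticleSum_dotProduct (u h : (α → Bool) → ℝ) :
    removeParticleSum u ⬝ᵥ h = u ⬝ᵥ addParticleSum h := by
  simp only [dotProduct, removeParticleSum, addParticleSum, sum_mul, mul_sum]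
  conv_lhs => rw [sum_comm]
  conv_rhs => rw [sum_comm]
  refine sum_congr rfl fun x _ => ?_
  rw [← sum_flip x]
  refine sum_congr rfl fun η _ => ?_
  cases hx : η x
  · simp [update_eq_self_iff (f := η).2 hx.symm]
  · simp

lemma addParticleSum_update_false (g : (α → Bool) → ℝ) {η : α → Bool} {y : α}
    (hy : η y = true) :
    addParticleSum g (update η y false) =
      g η + ∑ x, if η x = false then g (η ∘ swap x y) else 0 := by
  have key : ∀ x, (if update η y false x then 0 else g (update (update η y false) x true)) =
      (if x = y then g η else 0) + if η x = false then g (η ∘ swap x y) else 0 := by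
    intro x
    rcases eq_or_ne x y with rfl | hxy
    · simp [hy, update_eq_self_iff (f := η).2 hy.symm]
    · cases hx : η x
      · simp [hx, hxy, comp_swap_eq_update hx hy]
      · simp [hx, hxy]
  rw [addParticleSum, sum_congr rfl fun x _ => key x, sum_add_distrib,
    sum_ite_eq' univ y, if_pos (mem_univ y)]

lemma removeParticleSum_update_true (g : (α → Bool) → ℝ) {η : α → Bool} {x : α}
    (hx : η x = false) :
    removeParticleSum g (update η x true) =
      g η + ∑ y, if η y = true then g (η ∘ swap x y) else 0 := by
  have key : ∀ y, (if update η x true y then g (update (update η x true) y false) else 0) =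
      (if y = x then g η else 0) + if η y = true then g (η ∘ swap x y) else 0 := by
    intro y
    rcases eq_or_ne y x with rfl | hyx
    · simp [hx, update_eq_self_iff (f := η).2 hx.symm]
    · cases hy : η y
      · simp [hy, hyx]
      · simp [hy, hyx, comp_swap_eq_update hx hy, update_comm hyx]
  rw [removeParticleSum, sum_congr rfl fun y _ => key y, sum_add_distrib,
    sum_ite_eq' univ x, if_pos (mem_univ x)]

lemma removeParticleSum_addParticleSum (g : (α → Bool) → ℝ) (η : α → Bool) :
    removeParticleSum (addParticleSum g) η = particleCount η * g η + exchangeSum g η := by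
  rw [← sum_ite_true, sum_mul, exchangeSum, ← sum_add_distrib]
  refine sum_congr rfl fun y _ => ?_
  cases hy : η y
  · simp
  · simp [addParticleSum_update_false g hy]

lemma addParticleSum_removeParticleSum (g : (α → Bool) → ℝ) (η : α → Bool) :
    addParticleSum (removeParticleSum g) η =
      (Fintype.card α - particleCount η) * g η + exchangeSum g η := by
  rw [← sum_ite_false, sum_mul, exchangeSum, sum_comm, ← sum_add_distrib]
  refine sum_congr rfl fun x _ => ?_
  cases hx : η x
  · simp [removeParticleSum_update_true g hx]
  · simp

end LadderOperators

section BernoulliLaplace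

variable {α : Type*} [Fintype α] [DecidableEq α]

lemma OnSlice.addParticleSum {k : ℕ} {g : (α → Bool) → ℝ} (hg : OnSlice (k + 1) g) :
    OnSlice k (addParticleSum g) := by
  intro η hη
  refine sum_eq_zero fun x _ => ?_
  cases hx : η x
  · rw [if_neg (by simp)]
    exact hg _ (by rw [particleCount_update_true hx]; omega)
  · simp

lemma addParticleSum_zero : addParticleSum (0 : (α → Bool) → ℝ) = 0 :=
  funext fun η => by simp [addParticleSum]

lemma sum_addParticleSum (g : (α → Bool) → ℝ) :
    ∑ η, addParticleSum g η = ∑ η, particleCount η * g η := by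
  have h := removeParticleSum_dotProduct (fun _ => 1) g
  simp only [dotProduct, one_mul] at h
  rw [← h]
  simp only [removeParticleSum, sum_ite_true]

lemma dotProduct_removeParticleSum_addParticleSum (g : (α → Bool) → ℝ) :
    g ⬝ᵥ removeParticleSum (addParticleSum g) = addParticleSum g ⬝ᵥ addParticleSum g := by
  rw [dotProduct_comm, removeParticleSum_dotProduct]

lemma dotProduct_self_removeParticleSum {k : ℕ} {h : (α → Bool) → ℝ} (hh : OnSlice k h) :
    removeParticleSum h ⬝ᵥ removeParticleSum h =
      addParticleSum h ⬝ᵥ addParticleSum h + (Fintype.card α - 2 * k) * (h ⬝ᵥ h) := by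
  have hcomm : ∀ η, addParticleSum (removeParticleSum h) η =
      removeParticleSum (addParticleSum h) η + (Fintype.card α - 2 * particleCount η) * h η := by
    intro η
    rw [addParticleSum_removeParticleSum, removeParticleSum_addParticleSum]
    ring
  rw [removeParticleSum_dotProduct, ← dotProduct_removeParticleSum_addParticleSum,
    ← hh.sum_count_mul (fun m => Fintype.card α - 2 * (m : ℝ)), dotProduct, dotProduct,
    ← sum_add_distrib]
  exact sum_congr rfl fun η _ => by rw [hcomm]; ring

lemma dotProduct_self_addParticleSum_le (k : ℕ) (g : (α → Bool) → ℝ) (hg : OnSlice k g)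
    (hs : ∑ η, g η = 0) :
    addParticleSum g ⬝ᵥ addParticleSum g ≤ ((k : ℝ) - 1) * (Fintype.card α - k) * (g ⬝ᵥ g) := by
  induction k generalizing g with
  | zero => simp [hg.eq_zero_of_sum_eq_zero hs, addParticleSum_zero]
  | succ k ih =>
    set n : ℝ := (Fintype.card α : ℝ)
    obtain hkn | hkn := lt_or_ge (Fintype.card α) (k + 1)
    · simp [hg.eq_zero_of_card_lt hkn, addParticleSum_zero]
    set h := addParticleSum g
    have hh : OnSlice k h := hg.addParticleSum
    have hhs : ∑ η, h η = 0 := by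
      have hN := hg.sum_count_mul (fun m => (m : ℝ)) 1
      simp only [Pi.one_apply, mul_one, dotProduct_one] at hN
      rw [sum_addParticleSum, hN, hs, mul_zero]
    have hR : removeParticleSum h ⬝ᵥ removeParticleSum h ≤ k * (n - k - 1) * (h ⬝ᵥ h) := by
      rw [dotProduct_self_removeParticleSum hh]
      nlinarith [ih h hh hhs]
    have hcs : (h ⬝ᵥ h) ^ 2 ≤ k * (n - k - 1) * (h ⬝ᵥ h) * (g ⬝ᵥ g) := by
      calc (h ⬝ᵥ h) ^ 2 = (removeParticleSum h ⬝ᵥ g) ^ 2 := by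
            rw [removeParticleSum_dotProduct]
        _ ≤ (removeParticleSum h ⬝ᵥ removeParticleSum h) * (g ⬝ᵥ g) := by
            simpa only [dotProduct, sq] using sum_mul_sq_le_sq_mul_sq univ _ _
        _ ≤ _ := by gcongr; exact sum_nonneg fun η _ => mul_self_nonneg _
    have hc : 0 ≤ (k : ℝ) * (n - k - 1) := by
      have : (k : ℝ) + 1 ≤ n := by simp only [n]; exact_mod_cast hkn
      exact mul_nonneg k.cast_nonneg (by linarith)
    have hg0 : 0 ≤ g ⬝ᵥ g := sum_nonneg fun η _ => mul_self_nonneg _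
    have hh0 : 0 ≤ h ⬝ᵥ h := sum_nonneg fun η _ => mul_self_nonneg _
    have key : h ⬝ᵥ h ≤ k * (n - k - 1) * (g ⬝ᵥ g) := by
      rcases hh0.eq_or_lt with h0 | h0
      · rw [← h0]; exact mul_nonneg hc hg0
      · exact le_of_mul_le_mul_left (by nlinarith) h0
    convert key using 2
    push_cast
    ring

lemma sum_sum_comp_swap (g : (α → Bool) → ℝ) (η : α → Bool) :
    ∑ x, ∑ y, g (η ∘ swap x y) =
      ((particleCount η : ℝ) ^ 2 + (Fintype.card α - particleCount η) ^ 2) * g η +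
        2 * exchangeSum g η := by
  set G : α → α → ℝ := fun x y => if η x = false ∧ η y = true then g (η ∘ swap x y) else 0
  have hsplit : ∀ x y, g (η ∘ swap x y) =
      ((if η x then (1 : ℝ) else 0) * (if η y then 1 else 0) +
        (if η x then 0 else 1) * (if η y then 0 else 1)) * g η + G x y + G y x := by
    intro x y
    cases hx : η x <;> cases hy : η y <;>
      simp [G, hx, hy, comp_swap_of_eq, swap_comm y x]
  have hG : ∑ x, ∑ y, G x y = exchangeSum g η := sum_comm
  simp only [hsplit, sum_add_distrib, ← sum_mul, ← sum_mul_sum, sum_ite_true,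
    sum_ite_false, hG]
  rw [exchangeSum]
  simp only [G, swap_comm, and_comm]
  ring

lemma dotProduct_exchangeSum {k : ℕ} {g : (α → Bool) → ℝ} (hg : OnSlice k g) :
    g ⬝ᵥ exchangeSum g = addParticleSum g ⬝ᵥ addParticleSum g - k * (g ⬝ᵥ g) := by
  rw [← dotProduct_removeParticleSum_addParticleSum, ← hg.sum_count_mul (fun m => (m : ℝ)),
    dotProduct, dotProduct, ← sum_sub_distrib]
  exact sum_congr rfl fun η _ => by rw [removeParticleSum_addParticleSum]; ring

theorem bernoulliLaplace_poincare {k : ℕ} {g : (α → Bool) → ℝ} (hg : OnSlice k g)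
    (hs : ∑ η, g η = 0) :
    4 * Fintype.card α * (g ⬝ᵥ g) ≤ ∑ x, ∑ y, energy g (swap x y) := by
  set n : ℝ := (Fintype.card α : ℝ)
  have hcross : ∑ x, ∑ y, ∑ η, g (η ∘ swap x y) * g η =
      ((k : ℝ) ^ 2 + (n - k) ^ 2) * (g ⬝ᵥ g) + 2 * (g ⬝ᵥ exchangeSum g) := by
    have hc := hg.sum_count_mul (fun m => (m : ℝ) ^ 2 + (n - m) ^ 2) g
    rw [← hc, dotProduct, mul_sum, ← sum_add_distrib,
      sum_congr rfl fun x _ => sum_comm, sum_comm]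
    refine sum_congr rfl fun η _ => ?_
    simp only [← sum_mul]
    rw [sum_sum_comp_swap]
    ring
  have hE : ∑ x, ∑ y, energy g (swap x y) =
      2 * n ^ 2 * (g ⬝ᵥ g) - 2 * ∑ x, ∑ y, ∑ η, g (η ∘ swap x y) * g η := by
    simp only [energy_eq, sum_sub_distrib, ← mul_sum, sum_const,
      card_univ, nsmul_eq_mul]
    ring
  rw [hE, hcross, dotProduct_exchangeSum hg]
  nlinarith [dotProduct_self_addParticleSum_le k g hg hs]

end BernoulliLaplace

section Comparison

variable {α : Type*} [DecidableEq α]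

def swapChain (p : ℕ → α) : ℕ → List (Perm α)
  | 0 => []
  | 1 => [swap (p 0) (p 1)]
  | B + 2 => swap (p 0) (p 1) :: (swapChain (fun j => p (j + 1)) (B + 1) ++ [swap (p 0) (p 1)])

lemma length_swapChain_le (B : ℕ) (p : ℕ → α) : (swapChain p B).length ≤ 2 * B := by
  induction B using Nat.twoStepInduction generalizing p with
  | zero => simp [swapChain]
  | one => simp [swapChain]
  | more B _ ih =>
    simp only [swapChain, List.length_cons, List.length_append, List.length_nil]
    have := ih fun j => p (j + 1)
    omega

lemma prod_swapChain (B : ℕ) (p : ℕ → α) (hp : ∀ j < B, p j ≠ p B) :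
    (swapChain p B).prod = swap (p 0) (p B) := by
  induction B using Nat.twoStepInduction generalizing p with
  | zero => simp [swapChain, Perm.one_def]
  | one => simp [swapChain]
  | more B _ ih =>
    have hmid : (swapChain (fun j => p (j + 1)) (B + 1)).prod = swap (p 1) (p (B + 2)) :=
      ih (fun j => p (j + 1)) fun j hj => hp (j + 1) (by omega)
    simp only [swapChain, List.prod_cons, List.prod_append, List.prod_nil, mul_one, hmid]
    rw [← mul_assoc, swap_comm (p 0) (p 1), swap_comm (p 1) (p (B + 2)),
      swap_mul_swap_mul_swap (hp 1 (by omega)).symm (hp 0 (by omega)).symm]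

lemma sum_map_swapChain_le (Q : Perm α → ℝ) (hQ : ∀ σ, 0 ≤ Q σ) (B : ℕ) (p : ℕ → α) :
    ((swapChain p B).map Q).sum ≤ 2 * ∑ j ∈ range B, Q (swap (p j) (p (j + 1))) := by
  induction B using Nat.twoStepInduction generalizing p with
  | zero => simp [swapChain]
  | one =>
    simp only [swapChain, List.map_cons, List.map_nil, List.sum_cons, List.sum_nil, add_zero,
      sum_range_one, zero_add]
    linarith [hQ (swap (p 0) (p 1))]
  | more B _ ih =>
    simp only [swapChain, List.map_cons, List.map_append, List.sum_cons, List.sum_append,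
      List.map_nil, List.sum_nil, add_zero]
    rw [sum_range_succ']
    linarith [ih fun j => p (j + 1)]

variable [Fintype α]

lemma energy_mul_le (g : (α → Bool) → ℝ) (σ τ : Perm α) (t : ℝ) :
    t * energy g (σ * τ) ≤ (t + 1) * (t * energy g σ + energy g τ) := by
  have hτ : energy g τ = ∑ η, (g ((η ∘ σ) ∘ τ) - g (η ∘ σ)) ^ 2 :=
    (sum_comp_perm σ fun η => (g (η ∘ τ) - g η) ^ 2).symm
  rw [hτ, energy, energy, mul_sum, mul_sum, ← sum_add_distrib,
    mul_sum]
  refine sum_le_sum fun η _ => ?_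
  rw [show η ∘ ⇑(σ * τ) = (η ∘ σ) ∘ τ from rfl]
  -- `(t + 1) (t b² + a²) - t (a + b)² = (t b - a)²`
  nlinarith [sq_nonneg (t * (g (η ∘ σ) - g η) - (g ((η ∘ σ) ∘ τ) - g (η ∘ σ)))]

lemma energy_list_prod_le (g : (α → Bool) → ℝ) (l : List (Perm α)) :
    energy g l.prod ≤ l.length * (l.map (energy g)).sum := by
  induction l with
  | nil => simp [energy_one]
  | cons τ l ih =>
    by_cases hl : l = []
    · simp [hl]
    have ht : (0 : ℝ) < l.length := by exact_mod_cast List.length_pos_iff.2 hl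
    simp only [List.prod_cons, List.length_cons, List.map_cons, List.sum_cons, Nat.cast_succ]
    refine le_of_mul_le_mul_left ?_ ht
    calc l.length * energy g (τ * l.prod)
        ≤ (l.length + 1) * (l.length * energy g τ + energy g l.prod) := energy_mul_le g _ _ _
      _ ≤ (l.length + 1) * (l.length * energy g τ + l.length * (l.map (energy g)).sum) := by
          gcongr
      _ = l.length * ((l.length + 1) * (energy g τ + (l.map (energy g)).sum)) := by ring

theorem energy_swap_le_of_path (g : (α → Bool) → ℝ) (p : ℕ → α) (B : ℕ)
    (hp : ∀ j < B, p j ≠ p B) :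
    energy g (swap (p 0) (p B)) ≤ 4 * B * ∑ j ∈ range B, energy g (swap (p j) (p (j + 1))) := by
  have hS : 0 ≤ ((swapChain p B).map (energy g)).sum :=
    List.sum_nonneg fun _ h => by obtain ⟨σ, -, rfl⟩ := List.mem_map.1 h; exact energy_nonneg g σ
  have hlen : ((swapChain p B).length : ℝ) ≤ 2 * B := by exact_mod_cast length_swapChain_le B p
  calc energy g (swap (p 0) (p B))
      ≤ (swapChain p B).length * ((swapChain p B).map (energy g)).sum := by
        rw [← prod_swapChain B p hp]; exact energy_list_prod_le g _
    _ ≤ 2 * B * (2 * ∑ j ∈ range B, energy g (swap (p j) (p (j + 1)))) := by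
        gcongr
        exact sum_map_swapChain_le _ (energy_nonneg g) B p
    _ = _ := by ring

end Comparison

section Staircase

variable {d : ℕ}

def coordDist (x y : Fin d → ℤ) (i : ℕ) : ℕ :=
  if h : i < d then (y ⟨i, h⟩ - x ⟨i, h⟩).natAbs else 0

def startTime (x y : Fin d → ℤ) (i : ℕ) : ℕ :=
  ∑ m ∈ range i, coordDist x y m

/-- The lattice path from `x` to `y` that corrects the coordinates one after the other, one unit
step per time step, coordinate `m` moving during `[startTime x y m, startTime x y (m + 1))`. -/
def staircase (x y : Fin d → ℤ) (j : ℕ) (m : Fin d) : ℤ :=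
  x m + max (-((j - startTime x y m : ℕ) : ℤ)) (min ((j - startTime x y m : ℕ) : ℤ) (y m - x m))

variable (x y : Fin d → ℤ)

lemma coordDist_fin (m : Fin d) : coordDist x y m = (y m - x m).natAbs :=
  dif_pos m.isLt

lemma startTime_succ (i : ℕ) : startTime x y (i + 1) = startTime x y i + coordDist x y i :=
  sum_range_succ _ _

lemma startTime_mono : Monotone (startTime x y) :=
  fun _ _ h => sum_le_sum_of_subset (range_subset_range.2 h)

variable {x y}

lemma staircase_apply_of_le {j : ℕ} {m : Fin d} (h : j ≤ startTime x y m) :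
    staircase x y j m = x m := by
  unfold staircase
  omega

lemma staircase_apply_of_ge {j : ℕ} {m : Fin d} (h : startTime x y (m + 1) ≤ j) :
    staircase x y j m = y m := by
  have := startTime_succ x y m
  have := coordDist_fin x y m
  unfold staircase
  omega

lemma staircase_zero : staircase x y 0 = x :=
  funext fun _ => staircase_apply_of_le (Nat.zero_le _)

lemma staircase_of_ge {j : ℕ} (h : startTime x y d ≤ j) : staircase x y j = y :=
  funext fun m => staircase_apply_of_ge ((startTime_mono x y m.isLt).trans h)

lemma exists_active {j : ℕ} (hj : j < startTime x y d) :
    ∃ i : Fin d, startTime x y i ≤ j ∧ j < startTime x y (i + 1) := by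
  suffices ∀ K, j < startTime x y K → ∃ i < K, startTime x y i ≤ j ∧ j < startTime x y (i + 1) by
    obtain ⟨i, hi, h⟩ := this d hj
    exact ⟨⟨i, hi⟩, h⟩
  intro K
  induction K with
  | zero => simp [startTime]
  | succ K ih =>
    intro hK
    by_cases h : startTime x y K ≤ j
    · exact ⟨K, K.lt_succ_self, h, hK⟩
    · obtain ⟨i, hi, hij⟩ := ih (not_le.1 h)
      exact ⟨i, hi.trans K.lt_succ_self, hij⟩

lemma exists_active_of_ne {j : ℕ} (h : staircase x y j ≠ staircase x y (j + 1)) :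
    ∃ i : Fin d, startTime x y i ≤ j ∧ j < startTime x y (i + 1) := by
  refine exists_active (not_le.1 fun hj => h ?_)
  rw [staircase_of_ge hj, staircase_of_ge (hj.trans j.le_succ)]

section Active

variable {j : ℕ} {i : Fin d} (h₁ : startTime x y i ≤ j) (h₂ : j < startTime x y (i + 1))
include h₁ h₂

lemma staircase_apply_active_ne : staircase x y j i ≠ y i := by
  have := startTime_succ x y i
  have := coordDist_fin x y i
  unfold staircase
  omega

lemma sq_staircase_sub_staircase_succ :
    (staircase x y j i - staircase x y (j + 1) i) ^ 2 = 1 := by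
  have := startTime_succ x y i
  have := coordDist_fin x y i
  have h : staircase x y j i - staircase x y (j + 1) i = 1 ∨
      staircase x y j i - staircase x y (j + 1) i = -1 := by
    unfold staircase
    omega
  rcases h with h | h <;> rw [h] <;> norm_num

lemma staircase_succ_apply_of_ne {m : Fin d} (hm : m ≠ i) :
    staircase x y (j + 1) m = staircase x y j m := by
  rcases lt_or_gt_of_ne (Fin.val_ne_of_ne hm) with hlt | hgt
  · have := startTime_mono x y (show m.1 + 1 ≤ i.1 by omega)
    rw [staircase_apply_of_ge (by omega), staircase_apply_of_ge (by omega)]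
  · have := startTime_mono x y (show i.1 + 1 ≤ m.1 by omega)
    rw [staircase_apply_of_le (by omega), staircase_apply_of_le (by omega)]

lemma eq_startTime_add_natAbs : j = startTime x y i + (staircase x y j i - x i).natAbs := by
  have := startTime_succ x y i
  have := coordDist_fin x y i
  unfold staircase
  omega

end Active

end Staircase

section Box

variable {d ℓ : ℕ}

lemma mem_box_iff {x : Fin d → ℤ} : x ∈ Box d ℓ ↔ ∀ m, -(ℓ : ℤ) ≤ x m ∧ x m ≤ ℓ := by
  simp [Box, Pi.le_def, forall_and]

lemma card_box : (Box d ℓ).card = (2 * ℓ + 1) ^ d := by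
  simp only [Box, Pi.card_Icc, Int.card_Icc, prod_const, card_univ, Fintype.card_fin]
  congr 1
  omega

lemma staircase_mem_box {x y : Fin d → ℤ} (hx : x ∈ Box d ℓ) (hy : y ∈ Box d ℓ) (j : ℕ) :
    staircase x y j ∈ Box d ℓ := by
  rw [mem_box_iff] at *
  intro m
  have := hx m
  have := hy m
  unfold staircase
  omega

lemma startTime_le_of_mem_box {x y : Fin d → ℤ} (hx : x ∈ Box d ℓ) (hy : y ∈ Box d ℓ) :
    startTime x y d ≤ 2 * d * ℓ := by
  rw [mem_box_iff] at hx hy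
  calc startTime x y d ≤ ∑ _m ∈ range d, 2 * ℓ := by
        refine sum_le_sum fun i hi => ?_
        have hi : i < d := mem_range.1 hi
        have := hx ⟨i, hi⟩
        have := hy ⟨i, hi⟩
        rw [coordDist, dif_pos hi]
        omega
    _ = 2 * d * ℓ := by simp; ring

def sitePath (x y : Site d ℓ) (j : ℕ) : Site d ℓ :=
  ⟨staircase x y j, staircase_mem_box x.2 y.2 j⟩

theorem energy_swap_le_sum_sitePath (g : Config d ℓ → ℝ) (x y : Site d ℓ) :
    energy g (swap x y) ≤ 4 * (2 * d * ℓ : ℕ) *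
      ∑ j ∈ range (2 * d * ℓ), energy g (swap (sitePath x y j) (sitePath x y (j + 1))) := by
  set T := startTime x.1 y.1 d
  have hT : T ≤ 2 * d * ℓ := startTime_le_of_mem_box x.2 y.2
  have h0 : sitePath x y 0 = x := Subtype.ext staircase_zero
  have hT' : sitePath x y T = y := Subtype.ext (staircase_of_ge le_rfl)
  have hfresh : ∀ j < T, sitePath x y j ≠ sitePath x y T := by
    intro j hj hy
    obtain ⟨i, h₁, h₂⟩ := exists_active hj
    rw [hT'] at hy
    exact staircase_apply_active_ne h₁ h₂ (congrFun (congrArg Subtype.val hy) i)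
  have key := energy_swap_le_of_path g (sitePath x y) T hfresh
  rw [h0, hT'] at key
  refine key.trans ?_
  gcongr
  · exact sum_nonneg fun j _ => energy_nonneg g _
  · exact fun j _ _ => energy_nonneg g _

lemma siteAdj_sitePath {x y : Site d ℓ} {j : ℕ} (h : sitePath x y j ≠ sitePath x y (j + 1)) :
    SiteAdj (sitePath x y j) (sitePath x y (j + 1)) := by
  obtain ⟨i, h₁, h₂⟩ := exists_active_of_ne fun e => h (Subtype.ext e)
  refine (sum_eq_single i (fun m _ hm => ?_) (by simp)).trans
    (sq_staircase_sub_staircase_succ h₁ h₂)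
  simp [sitePath, staircase_succ_apply_of_ne h₁ h₂ hm]

def pathEdge (a : Site d ℓ × Site d ℓ × ℕ) : Site d ℓ × Site d ℓ :=
  (sitePath a.1 a.2.1 a.2.2, sitePath a.1 a.2.1 (a.2.2 + 1))

/-- A path edge `(u, v)` with `u ≠ v` moves the unique coordinate `i₀` where `u` and `v` differ;
the triple `(x, y, j)` is then determined by the coordinates of `x` up to `i₀`, those of `y`
from `i₀` on, and `u`. -/
lemma card_filter_pathEdge_le (s : Finset (Site d ℓ × Site d ℓ × ℕ)) {u v : Site d ℓ}
    (huv : u ≠ v) : #{a ∈ s | pathEdge a = (u, v)} ≤ (2 * ℓ + 1) ^ (d + 1) := by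
  set fiber := ({a ∈ s | pathEdge a = (u, v)} : Finset (Site d ℓ × Site d ℓ × ℕ))
  obtain ⟨i₀, hi₀⟩ : ∃ i₀, u.1 i₀ ≠ v.1 i₀ := by
    by_contra! h
    exact huv (Subtype.ext (funext h))
  have hfiber : ∀ a ∈ fiber,
      (∀ m, i₀ < m → a.1.1 m = u.1 m) ∧ (∀ m, m < i₀ → a.2.1.1 m = u.1 m) ∧
        a.2.2 = startTime a.1.1 a.2.1.1 i₀ + (u.1 i₀ - a.1.1 i₀).natAbs := by
    rintro ⟨x, y, j⟩ ha
    simp only [fiber, mem_filter, pathEdge, Prod.mk.injEq] at ha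
    obtain ⟨-, hu, hv⟩ := ha
    have hu' : staircase x.1 y.1 j = u.1 := congrArg Subtype.val hu
    have hv' : staircase x.1 y.1 (j + 1) = v.1 := congrArg Subtype.val hv
    have hne : staircase x.1 y.1 j ≠ staircase x.1 y.1 (j + 1) := by
      rw [hu', hv']
      exact fun h => huv (Subtype.ext h)
    obtain ⟨i, h₁, h₂⟩ := exists_active_of_ne hne
    obtain rfl : i = i₀ := by
      by_contra hi
      apply hi₀
      rw [← hu', ← hv', staircase_succ_apply_of_ne h₁ h₂ (Ne.symm hi)]
    refine ⟨fun m hm => ?_, fun m hm => ?_, ?_⟩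
    · rw [← hu', staircase_apply_of_le]
      exact h₂.le.trans (startTime_mono _ _ (show i.1 + 1 ≤ m.1 from hm))
    · rw [← hu', staircase_apply_of_ge]
      exact (startTime_mono _ _ (show m.1 + 1 ≤ i.1 from hm)).trans h₁
    · rw [← hu']
      exact eq_startTime_add_natAbs h₁ h₂
  let ψ : Site d ℓ × Site d ℓ × ℕ → (Fin d → ℤ) × ℤ :=
    fun a => (fun m => if m ≤ i₀ then a.1.1 m else a.2.1.1 m, a.2.1.1 i₀)
  have hmaps : ∀ a ∈ fiber, ψ a ∈ Box d ℓ ×ˢ Icc (-(ℓ : ℤ)) ℓ := by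
    rintro ⟨x, y, j⟩ -
    have hx := mem_box_iff.1 x.2
    have hy := mem_box_iff.1 y.2
    refine mem_product.2 ⟨mem_box_iff.2 fun m => ?_, mem_Icc.2 (hy i₀)⟩
    dsimp only [ψ]
    split_ifs
    exacts [hx m, hy m]
  have hinj : Set.InjOn ψ fiber := by
    rintro ⟨x, y, j⟩ ha ⟨x', y', j'⟩ ha' hψ
    obtain ⟨hx, hy, hj⟩ := hfiber _ ha
    obtain ⟨hx', hy', hj'⟩ := hfiber _ ha'
    simp only [ψ, Prod.mk.injEq, funext_iff] at hψ
    obtain ⟨hw, hi₀⟩ := hψ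
    have hxx : x = x' := Subtype.ext <| funext fun m => by
      rcases le_or_gt m i₀ with hm | hm
      · simpa [hm] using hw m
      · rw [hx m hm, hx' m hm]
    have hyy : y = y' := Subtype.ext <| funext fun m => by
      rcases lt_trichotomy m i₀ with hm | rfl | hm
      · rw [hy m hm, hy' m hm]
      · exact hi₀
      · simpa [hm.not_ge] using hw m
    subst hxx hyy
    simp only at hj hj'
    rw [hj, hj']
  calc #fiber ≤ #(Box d ℓ ×ˢ Icc (-(ℓ : ℤ)) ℓ) :=
        card_le_card_of_injOn ψ hmaps hinj
    _ = (2 * ℓ + 1) ^ (d + 1) := by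
        rw [card_product, card_box, Int.card_Icc, pow_succ]
        congr 2
        omega

theorem sum_sitePath_le (F : Site d ℓ → Site d ℓ → ℝ) (hF : ∀ u v, 0 ≤ F u v)
    (hF₀ : ∀ u, F u u = 0) (B : ℕ) :
    ∑ x, ∑ y, ∑ j ∈ range B, F (sitePath x y j) (sitePath x y (j + 1)) ≤
      (2 * ℓ + 1) ^ (d + 1) * ∑ u, ∑ v, if SiteAdj u v then F u v else 0 := by
  classical
  set s : Finset (Site d ℓ × Site d ℓ × ℕ) := univ ×ˢ univ ×ˢ range B
  set G : Site d ℓ × Site d ℓ → ℝ := fun b => if SiteAdj b.1 b.2 then F b.1 b.2 else 0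
  have hterm : ∀ b ∈ s.image pathEdge,
      #{a ∈ s | pathEdge a = b} • F b.1 b.2 ≤ (2 * ℓ + 1) ^ (d + 1) * G b := by
    rintro ⟨u, v⟩ hb
    rcases eq_or_ne u v with rfl | huv
    · simp [G, hF₀]
    obtain ⟨⟨x, y, j⟩, -, hxyj⟩ := mem_image.1 hb
    simp only [pathEdge, Prod.mk.injEq] at hxyj
    obtain ⟨rfl, rfl⟩ := hxyj
    have hG : G (sitePath x y j, sitePath x y (j + 1)) =
        F (sitePath x y j) (sitePath x y (j + 1)) :=
      if_pos (siteAdj_sitePath huv)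
    rw [nsmul_eq_mul, hG]
    gcongr
    · exact hF _ _
    · exact_mod_cast card_filter_pathEdge_le s huv
  calc ∑ x, ∑ y, ∑ j ∈ range B, F (sitePath x y j) (sitePath x y (j + 1))
      = ∑ a ∈ s, F (pathEdge a).1 (pathEdge a).2 := by
        simp only [s, sum_product, pathEdge]
    _ = ∑ b ∈ s.image pathEdge, #{a ∈ s | pathEdge a = b} • F b.1 b.2 :=
        sum_comp (fun b => F b.1 b.2) pathEdge
    _ ≤ ∑ b ∈ s.image pathEdge, (2 * ℓ + 1) ^ (d + 1) * G b := sum_le_sum hterm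
    _ ≤ ∑ b, (2 * ℓ + 1) ^ (d + 1) * G b :=
        sum_le_sum_of_subset_of_nonneg (subset_univ _) fun b _ _ =>
          mul_nonneg (by positivity) (by unfold G; split_ifs; exacts [hF _ _, le_rfl])
    _ = _ := by rw [← mul_sum, Fintype.sum_prod_type]

theorem dotProduct_self_le_sum_adjacent (hℓ : 1 ≤ ℓ) {k : ℕ} {g : Config d ℓ → ℝ}
    (hg : OnSlice k g) (hs : ∑ η, g η = 0) :
    g ⬝ᵥ g ≤ 6 * d * ℓ ^ 2 * ∑ u, ∑ v, if SiteAdj u v then energy g (swap u v) else 0 := by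
  set S := ∑ u, ∑ v, if SiteAdj u v then energy g (swap u v) else 0
  have hS : 0 ≤ S := sum_nonneg fun u _ => sum_nonneg fun v _ => by
    split_ifs
    exacts [energy_nonneg g _, le_rfl]
  have hcard : (Fintype.card (Site d ℓ) : ℝ) = (2 * ℓ + 1) ^ d := by
    rw [Fintype.card_coe, card_box]; push_cast; ring
  have hpaths := sum_sitePath_le (fun u v => energy g (swap u v)) (fun u v => energy_nonneg g _)
    (fun u => by rw [swap_self, ← Perm.one_def, energy_one]) (2 * d * ℓ)
  have hpos : (0 : ℝ) < 4 * (2 * ℓ + 1) ^ d := by positivity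
  have key : 4 * (2 * ℓ + 1 : ℝ) ^ d * (g ⬝ᵥ g) ≤
      4 * (2 * ℓ + 1 : ℝ) ^ d * (2 * d * ℓ * (2 * ℓ + 1) * S) := by
    calc 4 * (2 * ℓ + 1 : ℝ) ^ d * (g ⬝ᵥ g) ≤ ∑ x, ∑ y, energy g (swap x y) := by
          rw [← hcard]; exact bernoulliLaplace_poincare hg hs
      _ ≤ ∑ x, ∑ y, 4 * (2 * d * ℓ : ℕ) * ∑ j ∈ range (2 * d * ℓ),
            energy g (swap (sitePath x y j) (sitePath x y (j + 1))) :=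
          sum_le_sum fun x _ => sum_le_sum fun y _ => energy_swap_le_sum_sitePath g x y
      _ ≤ 4 * (2 * d * ℓ : ℕ) * ((2 * ℓ + 1) ^ (d + 1) * S) := by
          simp only [← mul_sum]
          exact mul_le_mul_of_nonneg_left hpaths (by positivity)
      _ = _ := by push_cast; ring
  have hℓ' : (1 : ℝ) ≤ ℓ := by exact_mod_cast hℓ
  calc g ⬝ᵥ g ≤ 2 * d * ℓ * (2 * ℓ + 1) * S := le_of_mul_le_mul_left key hpos
    _ ≤ 6 * d * ℓ ^ 2 * S := by
        refine mul_le_mul_of_nonneg_right ?_ hS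
        nlinarith [mul_nonneg (mul_nonneg d.cast_nonneg ℓ.cast_nonneg) (sub_nonneg.2 hℓ')]

end Box

section Slice

variable {d ℓ : ℕ}

lemma sum_sub_kawasakiExp (ρ : ℝ) (f : Config d ℓ → ℝ) :
    ∑ η ∈ kawasakiSlice d ℓ ρ, (f η - kawasakiExp d ℓ ρ f) = 0 := by
  rw [sum_sub_distrib, sum_const, nsmul_eq_mul, kawasakiExp,
    mul_div_cancel_of_imp' fun h =>
      sum_eq_zero fun η hη => absurd h (Nat.cast_ne_zero.2 (card_ne_zero_of_mem hη)),
    sub_self]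

lemma sum_sq_sub_le_of_sum_sub_eq_zero (hℓ : 1 ≤ ℓ) (ρ : ℝ) (f : Config d ℓ → ℝ) {c : ℝ}
    (hc : ∑ η ∈ kawasakiSlice d ℓ ρ, (f η - c) = 0) :
    ∑ η ∈ kawasakiSlice d ℓ ρ, (f η - c) ^ 2 ≤ 6 * d * ℓ ^ 2 *
      ∑ y, ∑ z, if SiteAdj y z then
        ∑ η ∈ kawasakiSlice d ℓ ρ, (f (exch y z η) - f η) ^ 2 else 0 := by
  classical
  set S := kawasakiSlice d ℓ ρ
  set K := ⌊ρ * ((Box d ℓ).card : ℝ)⌋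
  have hmem : ∀ η, η ∈ S ↔ (particleCount η : ℤ) = K := by
    intro η
    simp only [S, kawasakiSlice, mem_filter, mem_univ, true_and]
    rfl
  have hmem_comp : ∀ η (σ : Perm (Site d ℓ)), η ∘ σ ∈ S ↔ η ∈ S := by
    simp [hmem, particleCount_comp_perm]
  set g : Config d ℓ → ℝ := fun η => if η ∈ S then f η - c else 0
  have hg : OnSlice K.toNat g := fun η hη => if_neg fun h => hη (by have := (hmem η).1 h; omega)
  have hs : ∑ η, g η = 0 := by rw [sum_ite_mem, univ_inter, hc]
  have hgg : g ⬝ᵥ g = ∑ η ∈ S, (f η - c) ^ 2 := by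
    rw [dotProduct, ← univ_inter S, ← sum_ite_mem]
    refine sum_congr rfl fun η _ => ?_
    simp only [g]
    split_ifs <;> ring
  have henergy : ∀ y z, energy g (swap y z) = ∑ η ∈ S, (f (exch y z η) - f η) ^ 2 := by
    intro y z
    rw [energy, ← univ_inter S, ← sum_ite_mem]
    refine sum_congr rfl fun η _ => ?_
    simp only [g, hmem_comp, exch]
    split_ifs <;> ring
  rw [← hgg]
  simp only [← henergy]
  exact dotProduct_self_le_sum_adjacent hℓ hg hs

end Slice

end Kawasaki

/-- The sum over unordered nearest-neighbour edges `e = {y,z} ⊆ B_ℓ` is written as half the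
sum over ordered pairs of adjacent sites. -/
theorem kawasaki_spectral_gap_general (d : ℕ) :
    ∃ C : ℝ, 0 < C ∧ ∀ ρ ∈ Set.Icc (0 : ℝ) 1, ∀ ℓ : ℕ, 1 ≤ ℓ →
      ∀ f : Config d ℓ → ℝ,
        kawasakiExp d ℓ ρ (fun η => (f η - kawasakiExp d ℓ ρ f) ^ 2) ≤
          C * (ℓ : ℝ) ^ 2 *
            ((1 : ℝ) / 2 * ∑ y : Site d ℓ, ∑ z : Site d ℓ,
              if SiteAdj y z then
                kawasakiExp d ℓ ρ (fun η => (f (exch y z η) - f η) ^ 2)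
              else 0) := by
  refine ⟨12 * (d + 1), by positivity, fun ρ _ ℓ hℓ f => ?_⟩
  set S := kawasakiSlice d ℓ ρ
  set D := ∑ y : Site d ℓ, ∑ z : Site d ℓ,
    if SiteAdj y z then ∑ η ∈ S, (f (exch y z η) - f η) ^ 2 else 0
  have hD : 0 ≤ D := sum_nonneg fun y _ => sum_nonneg fun z _ => by
    split_ifs
    exacts [sum_nonneg fun η _ => sq_nonneg _, le_rfl]
  have hdirichlet : (∑ y : Site d ℓ, ∑ z : Site d ℓ, if SiteAdj y z then
      kawasakiExp d ℓ ρ (fun η => (f (exch y z η) - f η) ^ 2) else 0) = D / #S := by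
    simp only [D, kawasakiExp, sum_div, ite_div, zero_div]
    rfl
  have key : ∑ η ∈ S, (f η - kawasakiExp d ℓ ρ f) ^ 2 ≤ 6 * d * ℓ ^ 2 * D :=
    Kawasaki.sum_sq_sub_le_of_sum_sub_eq_zero hℓ ρ f (Kawasaki.sum_sub_kawasakiExp ρ f)
  rw [hdirichlet, kawasakiExp]
  calc (∑ η ∈ S, (f η - kawasakiExp d ℓ ρ f) ^ 2) / #S ≤ 6 * d * ℓ ^ 2 * D / #S :=
        div_le_div_of_nonneg_right key (Nat.cast_nonneg _)
    _ ≤ 6 * (d + 1) * ℓ ^ 2 * D / #S := by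
        refine div_le_div_of_nonneg_right (mul_le_mul_of_nonneg_right ?_ hD) (Nat.cast_nonneg _)
        gcongr
        linarith
    _ = _ := by ring

/-- **Spectral gap for the Kawasaki dynamics in finite volume.**
Fix `d ≥ 2`.  There exists `C_K(d) < ∞` such that for every `ρ ∈ [0,1]`, every `ℓ ≥ 1`
and every `f : {0,1}^{B_ℓ} → ℝ`,
`⟨(f − ⟨f⟩_{ℓ,ρ})²⟩_{ℓ,ρ} ≤ C_K ℓ² Σ_{e ∈ 𝔹_ℓ} ⟨(f(η^e) − f(η))²⟩_{ℓ,ρ}`.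
The sum over unordered nearest-neighbour edges `e = {y,z} ⊆ B_ℓ` is written as half the
sum over ordered pairs of adjacent sites. -/
theorem kawasaki_spectral_gap (d : ℕ) (hd : 2 ≤ d) :
    ∃ C : ℝ, 0 < C ∧ ∀ ρ ∈ Set.Icc (0 : ℝ) 1, ∀ ℓ : ℕ, 1 ≤ ℓ →
      ∀ f : Config d ℓ → ℝ,
        kawasakiExp d ℓ ρ (fun η => (f η - kawasakiExp d ℓ ρ f) ^ 2) ≤
          C * (ℓ : ℝ) ^ 2 *
            ((1 : ℝ) / 2 * ∑ y : Site d ℓ, ∑ z : Site d ℓ,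
              if SiteAdj y z then
                kawasakiExp d ℓ ρ (fun η => (f (exch y z η) - f η) ^ 2)
              else 0) :=
  kawasaki_spectral_gap_general d

end
end

section
/- Binomial ratio estimate: There exists a universal constant C < ∞ such that for all integers N, N₁, N₂ with N > N₁ > N₂ > 0, one has [C(N, N₁)]^{−1} · C(N − N₂, N₁ − N₂) ≤ C · √( N₁(N − N₂) / (N(N₁ − N₂)) ) · (N₁/N)^{N₂}, where C(a,b) denotes the binomial coefficient 'a choose b'. -/
lemma aux_choose_desc (N N₁ : ℕ) (h1 : N₁ ≤ N) : ∀ N₂ : ℕ, N₂ ≤ N₁ →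
    (N - N₂).choose (N₁ - N₂) * N.descFactorial N₂ = N.choose N₁ * N₁.descFactorial N₂ := by
  intro N₂
  induction N₂ with
  | zero => simp
  | succ k ih =>
    intro hk
    have hk1 : k ≤ N₁ := Nat.le_of_succ_le hk
    have hkN1 : k < N₁ := hk
    have hkN : k < N := lt_of_lt_of_le hkN1 h1
    have e1 : N - (k + 1) = (N - k) - 1 := by omega
    have e2 : N₁ - (k + 1) = (N₁ - k) - 1 := by omega
    have e3 : (N - k - 1) + 1 = N - k := by omega
    have e4 : (N₁ - k - 1) + 1 = N₁ - k := by omega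
    have key : (N - k) * (N - k - 1).choose (N₁ - k - 1)
        = (N - k).choose (N₁ - k) * (N₁ - k) := by
      have := Nat.add_one_mul_choose_eq (N - k - 1) (N₁ - k - 1)
      rwa [e3, e4] at this
    calc (N - (k+1)).choose (N₁ - (k+1)) * N.descFactorial (k+1)
        = ((N - k) * (N - k - 1).choose (N₁ - k - 1)) * N.descFactorial k := by
          rw [e1, e2, Nat.descFactorial_succ]; ring
      _ = ((N - k).choose (N₁ - k) * (N₁ - k)) * N.descFactorial k := by rw [key]
      _ = (N₁ - k) * ((N - k).choose (N₁ - k) * N.descFactorial k) := by ring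
      _ = (N₁ - k) * (N.choose N₁ * N₁.descFactorial k) := by rw [ih hk1]
      _ = N.choose N₁ * N₁.descFactorial (k+1) := by rw [Nat.descFactorial_succ]; ring

lemma aux_desc_le (N N₁ : ℕ) (h1 : N₁ ≤ N) : ∀ N₂ : ℕ,
    N₁.descFactorial N₂ * N ^ N₂ ≤ N₁ ^ N₂ * N.descFactorial N₂ := by
  intro N₂
  induction N₂ with
  | zero => simp
  | succ k ih =>
    have hcross : (N₁ - k) * N ≤ (N - k) * N₁ := by
      have h : k * N₁ ≤ k * N := Nat.mul_le_mul_left k h1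
      rw [Nat.sub_mul, Nat.sub_mul, mul_comm N₁ N]
      exact Nat.sub_le_sub_left h (N * N₁)
    calc N₁.descFactorial (k+1) * N ^ (k+1)
        = ((N₁ - k) * N) * (N₁.descFactorial k * N ^ k) := by
          rw [Nat.descFactorial_succ, pow_succ]; ring
      _ ≤ ((N - k) * N₁) * (N₁ ^ k * N.descFactorial k) := Nat.mul_le_mul hcross ih
      _ = N₁ ^ (k+1) * N.descFactorial (k+1) := by
          rw [Nat.descFactorial_succ, pow_succ]; ring

/-- **Binomial ratio estimate.**
There exists a universal constant `C < ∞` such that for all integers `N > N₁ > N₂ > 0`,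
`(choose N N₁)⁻¹ * choose (N − N₂) (N₁ − N₂)
  ≤ C √(N₁ (N − N₂) / (N (N₁ − N₂))) (N₁/N)^{N₂}`. -/
theorem binomial_ratio_estimate :
    ∃ C : ℝ, ∀ N N₁ N₂ : ℕ, N₁ < N → N₂ < N₁ → 0 < N₂ →
      ((N.choose N₁ : ℝ))⁻¹ * ((N - N₂).choose (N₁ - N₂) : ℝ) ≤
        C * Real.sqrt (((N₁ : ℝ) * ((N : ℝ) - (N₂ : ℝ))) / ((N : ℝ) * ((N₁ : ℝ) - (N₂ : ℝ))))
          * ((N₁ : ℝ) / (N : ℝ)) ^ N₂ := by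
  refine ⟨1, fun N N₁ N₂ h1 h2 h3 => ?_⟩
  have h21 : N₂ ≤ N₁ := le_of_lt h2
  have h1' : N₁ ≤ N := le_of_lt h1
  have hN : 0 < N := lt_trans (lt_trans h3 h2) h1
  have hNpos : (0:ℝ) < (N:ℝ) := by exact_mod_cast hN
  have hN1pos : (0:ℝ) < (N₁:ℝ) := by exact_mod_cast lt_trans h3 h2
  have hN2lt : (N₂:ℝ) < (N₁:ℝ) := by exact_mod_cast h2
  have hN1lt : (N₁:ℝ) < (N:ℝ) := by exact_mod_cast h1
  have hdNpos : (0:ℝ) < (N.descFactorial N₂ : ℝ) := by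
    have : 0 < N.descFactorial N₂ := by
      rw [Nat.descFactorial_eq_factorial_mul_choose]
      exact Nat.mul_pos (Nat.factorial_pos _) (Nat.choose_pos (h21.trans h1'))
    exact_mod_cast this
  have hchoosepos : (0:ℝ) < (N.choose N₁ : ℝ) := by
    exact_mod_cast Nat.choose_pos h1'
  -- step 1: exact value of the ratio
  have hid : ((N - N₂).choose (N₁ - N₂) : ℝ) * (N.descFactorial N₂ : ℝ)
      = (N.choose N₁ : ℝ) * (N₁.descFactorial N₂ : ℝ) := by
    exact_mod_cast congrArg (Nat.cast : ℕ → ℝ) (aux_choose_desc N N₁ h1' N₂ h21)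
  have hratio : ((N.choose N₁ : ℝ))⁻¹ * ((N - N₂).choose (N₁ - N₂) : ℝ)
      = (N₁.descFactorial N₂ : ℝ) / (N.descFactorial N₂ : ℝ) := by
    field_simp
    linarith [hid]
  -- step 2: descFactorial ratio bound
  have hle : (N₁.descFactorial N₂ : ℝ) / (N.descFactorial N₂ : ℝ)
      ≤ ((N₁ : ℝ) / (N : ℝ)) ^ N₂ := by
    rw [div_pow, div_le_div_iff₀ hdNpos (by positivity)]
    exact_mod_cast aux_desc_le N N₁ h1' N₂
  -- step 3: the sqrt factor is at least 1
  have hsqrt : 1 ≤ Real.sqrt (((N₁ : ℝ) * ((N : ℝ) - (N₂ : ℝ))) / ((N : ℝ) * ((N₁ : ℝ) - (N₂ : ℝ)))) := by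
    rw [Real.one_le_sqrt, le_div_iff₀ (by nlinarith)]
    nlinarith
  rw [hratio, one_mul]
  calc (N₁.descFactorial N₂ : ℝ) / (N.descFactorial N₂ : ℝ)
      ≤ ((N₁ : ℝ) / (N : ℝ)) ^ N₂ := hle
    _ ≤ Real.sqrt (((N₁ : ℝ) * ((N : ℝ) - (N₂ : ℝ))) / ((N : ℝ) * ((N₁ : ℝ) - (N₂ : ℝ))))
        * ((N₁ : ℝ) / (N : ℝ)) ^ N₂ := le_mul_of_one_le_left (by positivity) hsqrt
end

section
/- Entropy function inequality: For every ρ ∈ (0,1) and every x ∈ [0, ρ), the function f_ρ(x) := ρ·log ρ + (1 − x)·log(1 − x) − (ρ − x)·log(ρ − x) satisfies f_ρ(x) ≤ x·log ρ. -/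
/-!
Moving terms across, the claim reads `(1 - x) log (1 - x) ≤ (ρ - x) log ((ρ - x) / ρ)`.
This is the two-term log-sum inequality for the pairs `(ρ - x, ρ)` and `(1 - ρ, 1 - ρ)`,
which in turn is Jensen's inequality for the convex function `t ↦ t log t`.
-/

open Real

theorem Real.add_mul_log_add_div_add_le {a₁ a₂ b₁ b₂ : ℝ} (ha₁ : 0 ≤ a₁) (ha₂ : 0 ≤ a₂)
    (hb₁ : 0 < b₁) (hb₂ : 0 < b₂) :
    (a₁ + a₂) * log ((a₁ + a₂) / (b₁ + b₂)) ≤ a₁ * log (a₁ / b₁) + a₂ * log (a₂ / b₂) := by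
  have hB : 0 < b₁ + b₂ := add_pos hb₁ hb₂
  have hweights : b₁ / (b₁ + b₂) + b₂ / (b₁ + b₂) = 1 := by field_simp
  have jensen := convexOn_mul_log.2 (Set.mem_Ici.2 (div_nonneg ha₁ hb₁.le))
    (Set.mem_Ici.2 (div_nonneg ha₂ hb₂.le)) (div_pos hb₁ hB).le (div_pos hb₂ hB).le hweights
  have hmean : b₁ / (b₁ + b₂) * (a₁ / b₁) + b₂ / (b₁ + b₂) * (a₂ / b₂) = (a₁ + a₂) / (b₁ + b₂) := by
    field_simp
  simp only [smul_eq_mul, hmean] at jensen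
  calc (a₁ + a₂) * log ((a₁ + a₂) / (b₁ + b₂))
      = (b₁ + b₂) * ((a₁ + a₂) / (b₁ + b₂) * log ((a₁ + a₂) / (b₁ + b₂))) := by
        field_simp
    _ ≤ (b₁ + b₂) * (b₁ / (b₁ + b₂) * (a₁ / b₁ * log (a₁ / b₁))
          + b₂ / (b₁ + b₂) * (a₂ / b₂ * log (a₂ / b₂))) := by gcongr
    _ = a₁ * log (a₁ / b₁) + a₂ * log (a₂ / b₂) := by
        field_simp

/-- **Entropy function inequality.**
For every `ρ ∈ (0,1)` and every `x ∈ [0, ρ)`, the function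
`f_ρ(x) := ρ log ρ + (1 − x) log (1 − x) − (ρ − x) log (ρ − x)`
satisfies `f_ρ(x) ≤ x log ρ`. -/
theorem entropy_function_inequality (ρ : ℝ) (hρ : ρ ∈ Set.Ioo (0 : ℝ) 1)
    (x : ℝ) (hx : x ∈ Set.Ico (0 : ℝ) ρ) :
    ρ * Real.log ρ + (1 - x) * Real.log (1 - x) - (ρ - x) * Real.log (ρ - x)
      ≤ x * Real.log ρ := by
  obtain ⟨hρ0, hρ1⟩ := hρ
  have hρx : 0 < ρ - x := sub_pos.2 hx.2
  have h1ρ : 0 < 1 - ρ := sub_pos.2 hρ1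
  have logsum := add_mul_log_add_div_add_le hρx.le h1ρ.le hρ0 h1ρ
  rw [div_self h1ρ.ne', log_one, mul_zero, add_zero, log_div hρx.ne' hρ0.ne',
    show ρ - x + (1 - ρ) = 1 - x by ring, show ρ + (1 - ρ) = 1 by ring, div_one] at logsum
  linarith
end

section
/- Moment inequality: For every real p ≥ 1 there exists a constant C(p) < ∞ such that for every nonnegative random variable X on a probability space with E[X^{2p}] < ∞, one has E[ |X − E[X]|^{2p} ] ≤ C · E[ (X^p − E[X^p])² ]. -/
/-!
Put `c = (E[X^p])^{1/p}`. Superadditivity of `t ↦ t^p` on `[0, ∞)` gives the pointwise bound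
`|x - c|^p ≤ |x^p - c^p|`, hence `E|X - c|^{2p} ≤ E[(X^p - E[X^p])²]`. Replacing the constant
`c` by the mean costs at most a factor `2^{2p}`: `|E[X] - c|^{2p} ≤ E|X - c|^{2p}` by Jensen,
and `(s + t)^{2p} ≤ 2^{2p-1}(s^{2p} + t^{2p})`.
-/

open MeasureTheory

namespace Real

variable {a b q : ℝ}

lemma rpow_sub_le_rpow_sub_rpow (hb : 0 ≤ b) (hba : b ≤ a) (hq : 1 ≤ q) :
    (a - b) ^ q ≤ a ^ q - b ^ q := by
  have h := add_rpow_le_rpow_add (sub_nonneg.2 hba) hb hq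
  rw [sub_add_cancel] at h
  linarith

lemma abs_sub_rpow_le_abs_rpow_sub_rpow (ha : 0 ≤ a) (hb : 0 ≤ b) (hq : 1 ≤ q) :
    |a - b| ^ q ≤ |a ^ q - b ^ q| := by
  wlog hba : b ≤ a generalizing a b
  · simpa only [abs_sub_comm] using this hb ha (le_of_not_ge hba)
  have hq0 : 0 ≤ q := by linarith
  rw [abs_of_nonneg (sub_nonneg.2 hba),
    abs_of_nonneg (sub_nonneg.2 (rpow_le_rpow hb hba hq0))]
  exact rpow_sub_le_rpow_sub_rpow hb hba hq

lemma abs_sub_rpow_two_mul_le_sq_rpow_sub_rpow (ha : 0 ≤ a) (hb : 0 ≤ b) (hq : 1 ≤ q) :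
    |a - b| ^ (2 * q) ≤ (a ^ q - b ^ q) ^ 2 := by
  rw [mul_comm, rpow_mul (abs_nonneg _), rpow_two, ← sq_abs (a ^ q - b ^ q)]
  gcongr
  exact abs_sub_rpow_le_abs_rpow_sub_rpow ha hb hq

lemma rpow_add_le_mul_rpow_add_rpow (ha : 0 ≤ a) (hb : 0 ≤ b) (hq : 1 ≤ q) :
    (a + b) ^ q ≤ 2 ^ (q - 1) * (a ^ q + b ^ q) := by
  lift a to NNReal using ha
  lift b to NNReal using hb
  exact_mod_cast NNReal.rpow_add_le_mul_rpow_add_rpow a b hq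

end Real

section

variable {Ω : Type*} [MeasurableSpace Ω] {μ : Measure Ω} {Y : Ω → ℝ} {q : ℝ}

lemma integrable_of_integrable_rpow_of_nonneg [IsFiniteMeasure μ] (hq : 1 ≤ q)
    (hY : AEStronglyMeasurable Y μ) (hY0 : ∀ ω, 0 ≤ Y ω)
    (hYq : Integrable (fun ω => Y ω ^ q) μ) : Integrable Y μ := by
  have h := integrable_norm_rpow_of_le hY zero_le_one (by linarith) hq
    (by simpa only [Real.norm_of_nonneg, hY0] using hYq)
  simpa only [Real.norm_of_nonneg, hY0, Real.rpow_one] using h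

variable [IsProbabilityMeasure μ]

lemma abs_integral_rpow_le_integral_abs_rpow (hq : 1 ≤ q) (hY : Integrable Y μ)
    (hYq : Integrable (fun ω => |Y ω| ^ q) μ) :
    |∫ ω, Y ω ∂μ| ^ q ≤ ∫ ω, |Y ω| ^ q ∂μ :=
  calc |∫ ω, Y ω ∂μ| ^ q ≤ (∫ ω, |Y ω| ∂μ) ^ q := by
        gcongr
        exact abs_integral_le_integral_abs
    _ ≤ ∫ ω, |Y ω| ^ q ∂μ :=
        (convexOn_rpow hq).map_integral_le (Real.continuous_rpow_const (by linarith)).continuousOn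
          isClosed_Ici (ae_of_all _ fun ω => abs_nonneg (Y ω)) hY.abs hYq

lemma integral_abs_sub_integral_rpow_le (hq : 1 ≤ q) (c : ℝ) (hY : Integrable Y μ)
    (hYc : Integrable (fun ω => |Y ω - c| ^ q) μ) :
    ∫ ω, |Y ω - ∫ ω', Y ω' ∂μ| ^ q ∂μ ≤ 2 ^ q * ∫ ω, |Y ω - c| ^ q ∂μ := by
  set d := |∫ ω, Y ω ∂μ - c|
  have hd : d ^ q ≤ ∫ ω, |Y ω - c| ^ q ∂μ := by
    have h := abs_integral_rpow_le_integral_abs_rpow (Y := fun ω => Y ω - c) hq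
      (hY.sub (integrable_const c)) hYc
    rwa [integral_sub hY (integrable_const c), integral_const, probReal_univ, one_smul] at h
  have hpt (ω : Ω) :
      |Y ω - ∫ ω', Y ω' ∂μ| ^ q ≤ 2 ^ (q - 1) * (|Y ω - c| ^ q + d ^ q) :=
    calc |Y ω - ∫ ω', Y ω' ∂μ| ^ q ≤ (|Y ω - c| + d) ^ q := by
          gcongr
          exact (abs_sub_le _ c _).trans_eq (by rw [abs_sub_comm c])
      _ ≤ 2 ^ (q - 1) * (|Y ω - c| ^ q + d ^ q) :=
          Real.rpow_add_le_mul_rpow_add_rpow (abs_nonneg _) (abs_nonneg _) hq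
  calc ∫ ω, |Y ω - ∫ ω', Y ω' ∂μ| ^ q ∂μ
      ≤ ∫ ω, 2 ^ (q - 1) * (|Y ω - c| ^ q + d ^ q) ∂μ :=
        integral_mono_of_nonneg (ae_of_all _ fun ω => by positivity)
          ((hYc.add (integrable_const _)).const_mul _) (ae_of_all _ hpt)
    _ = 2 ^ (q - 1) * (∫ ω, |Y ω - c| ^ q ∂μ + d ^ q) := by
        rw [integral_const_mul, integral_add hYc (integrable_const _), integral_const,
          probReal_univ, one_smul]
    _ ≤ 2 ^ (q - 1) * (∫ ω, |Y ω - c| ^ q ∂μ + ∫ ω, |Y ω - c| ^ q ∂μ) := by gcongr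
    _ = 2 ^ q * ∫ ω, |Y ω - c| ^ q ∂μ := by
        rw [Real.rpow_sub_one two_ne_zero]
        ring

end

/-- **Moment inequality.**
For every real `p ≥ 1` there exists a constant `C(p) < ∞` such that for every nonnegative
random variable `X` on a probability space with `E[X^{2p}] < ∞`, one has
`E[|X − E[X]|^{2p}] ≤ C E[(X^p − E[X^p])²]`. -/
theorem moment_inequality (p : ℝ) (hp : 1 ≤ p) :
    ∃ C : ℝ, ∀ (Ω : Type) (_ : MeasurableSpace Ω) (μ : Measure Ω),
      IsProbabilityMeasure μ → ∀ X : Ω → ℝ, Measurable X → (∀ ω, 0 ≤ X ω) →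
      Integrable (fun ω => X ω ^ (2 * p)) μ →
      ∫ ω, |X ω - ∫ ω', X ω' ∂μ| ^ (2 * p) ∂μ ≤
        C * ∫ ω, (X ω ^ p - ∫ ω', X ω' ^ p ∂μ) ^ 2 ∂μ := by
  refine ⟨2 ^ (2 * p), fun Ω _ μ _ X hXm hX0 hX2p => ?_⟩
  have hp0 : 0 < p := by linarith
  set m := ∫ ω, X ω ^ p ∂μ
  have hm : 0 ≤ m := integral_nonneg fun ω => Real.rpow_nonneg (hX0 ω) p
  set c := m ^ p⁻¹
  have hcp : c ^ p = m := Real.rpow_inv_rpow hm hp0.ne'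
  have hpt : ∀ ω, |X ω - c| ^ (2 * p) ≤ (X ω ^ p - m) ^ 2 := fun ω =>
    hcp ▸ Real.abs_sub_rpow_two_mul_le_sq_rpow_sub_rpow (hX0 ω) (by positivity) hp
  have hX : Integrable X μ :=
    integrable_of_integrable_rpow_of_nonneg (by linarith) hXm.aestronglyMeasurable hX0 hX2p
  have hsq : Integrable (fun ω => (X ω ^ p - m) ^ 2) μ := by
    refine (MemLp.sub ?_ (memLp_const m)).integrable_sq
    refine (memLp_two_iff_integrable_sq (hXm.pow_const p).aestronglyMeasurable).2 ?_
    simpa only [mul_comm 2 p, Real.rpow_mul (hX0 _), Real.rpow_two] using hX2p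
  have hXc : Integrable (fun ω => |X ω - c| ^ (2 * p)) μ :=
    hsq.mono' ((hXm.sub_const c).abs.pow_const _).aestronglyMeasurable
      (ae_of_all _ fun ω => by
        rw [Real.norm_of_nonneg (by positivity)]
        exact hpt ω)
  calc ∫ ω, |X ω - ∫ ω', X ω' ∂μ| ^ (2 * p) ∂μ
      ≤ 2 ^ (2 * p) * ∫ ω, |X ω - c| ^ (2 * p) ∂μ :=
        integral_abs_sub_integral_rpow_le (by linarith) c hX hXc
    _ ≤ 2 ^ (2 * p) * ∫ ω, (X ω ^ p - m) ^ 2 ∂μ := by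
        gcongr
        exact hpt
end

section
/- Deterministic power inequality I: For every real p ≥ 1 there exists a constant C(p) < ∞ such that for all real numbers x, y ≥ 0, one has (x^p − y^p)² ≤ C · (x^{2p−1} − y^{2p−1}) · (x − y). -/
lemma power_key (p : ℝ) (hp : 1 ≤ p) (x y : ℝ) (hy : 0 ≤ y) (hyx : y ≤ x) :
    (x ^ p - y ^ p) ^ 2 ≤ p * ((x ^ (2 * p - 1) - y ^ (2 * p - 1)) * (x - y)) := by
  have hx : 0 ≤ x := hy.trans hyx
  rcases eq_or_lt_of_le hx with hx0 | hx0
  · have hy0 : y = 0 := le_antisymm (hyx.trans hx0.ge) hy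
    subst hy0
    rw [← hx0]
    simp
  set t : ℝ := y / x with ht_def
  have ht : 0 ≤ t := div_nonneg hy hx
  have ht1 : t ≤ 1 := div_le_one_of_le₀ hyx hx
  have e1 : t ^ p * x ^ p = y ^ p := by
    rw [← Real.mul_rpow ht hx, div_mul_cancel₀ y hx0.ne']
  have e0 : t * x = y := div_mul_cancel₀ y hx0.ne'
  have e2 : (1 - t) * x = x - y := by rw [← e0]; ring
  have hxx : x ^ (p - 1) * x = x ^ p := by
    rw [← Real.rpow_add_one hx0.ne' (p - 1)]; ring_nf
  have hxp : 0 < x ^ p := Real.rpow_pos_of_pos hx0 p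
  -- Bernoulli: 1 - t^p ≤ p * (1 - t)
  have key1 : 1 - t ^ p ≤ p * (1 - t) := by
    have hs : (-1 : ℝ) ≤ t - 1 := by linarith
    have hb := one_add_mul_self_le_rpow_one_add hs hp
    have h1 : (1 + (t - 1)) = t := by ring
    rw [h1] at hb
    nlinarith
  -- Lemma A: x^p - y^p ≤ p * x^(p-1) * (x - y)
  have hA : x ^ p - y ^ p ≤ p * x ^ (p - 1) * (x - y) := by
    calc x ^ p - y ^ p = (1 - t ^ p) * x ^ p := by rw [← e1]; ring
      _ ≤ (p * (1 - t)) * x ^ p := by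
          apply mul_le_mul_of_nonneg_right key1 hxp.le
      _ = p * x ^ (p - 1) * (x - y) := by rw [← hxx, ← e2]; ring
  -- Lemma B: x^p - y^p ≤ x^(1-p) * (x^(2p-1) - y^(2p-1))
  have hB : x ^ p - y ^ p ≤ x ^ (1 - p) * (x ^ (2 * p - 1) - y ^ (2 * p - 1)) := by
    have hxx2 : x ^ (1 - p) * x ^ (2 * p - 1) = x ^ p := by
      rw [← Real.rpow_add hx0]; ring_nf
    have hkey : x ^ (1 - p) * y ^ (2 * p - 1) ≤ y ^ p := by
      rcases eq_or_lt_of_le hy with hy0 | hy0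
      · rw [← hy0, Real.zero_rpow (by linarith : (2 : ℝ) * p - 1 ≠ 0),
          Real.zero_rpow (by linarith : p ≠ 0)]; simp
      · have h1 : y ^ (2 * p - 1) = y ^ p * y ^ (p - 1) := by
          rw [← Real.rpow_add hy0]; ring_nf
        have h2 : x ^ (1 - p) * y ^ (p - 1) ≤ 1 := by
          have h3 : x ^ (1 - p) = (x ^ (p - 1))⁻¹ := by
            rw [show (1 : ℝ) - p = -(p - 1) by ring, Real.rpow_neg hx]
          rw [h3, inv_mul_le_iff₀ (Real.rpow_pos_of_pos hx0 (p - 1)), mul_one]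
          exact Real.rpow_le_rpow hy hyx (by linarith)
        calc x ^ (1 - p) * y ^ (2 * p - 1) = (x ^ (1 - p) * y ^ (p - 1)) * y ^ p := by
              rw [h1]; ring
          _ ≤ 1 * y ^ p := mul_le_mul_of_nonneg_right h2 (Real.rpow_pos_of_pos hy0 p).le
          _ = y ^ p := one_mul _
    nlinarith
  have hApos : 0 ≤ x ^ p - y ^ p := by
    have := Real.rpow_le_rpow hy hyx (by linarith : (0:ℝ) ≤ p)
    linarith
  have hp0 : (0:ℝ) ≤ p := by linarith
  have hB1pos : 0 ≤ p * x ^ (p - 1) * (x - y) :=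
    mul_nonneg (mul_nonneg hp0 (Real.rpow_nonneg hx _)) (by linarith)
  have hmul : (x ^ p - y ^ p) ^ 2 ≤
      (p * x ^ (p - 1) * (x - y)) * (x ^ (1 - p) * (x ^ (2 * p - 1) - y ^ (2 * p - 1))) := by
    rw [sq]
    exact mul_le_mul hA hB hApos hB1pos
  have hone : x ^ (p - 1) * x ^ (1 - p) = 1 := by
    rw [← Real.rpow_add hx0]
    norm_num
  nlinarith [hmul, hone]

/-- **Deterministic power inequality I.**
For every real `p ≥ 1` there exists a constant `C(p) < ∞` such that for all reals
`x, y ≥ 0`, one has `(x^p − y^p)² ≤ C (x^{2p−1} − y^{2p−1})(x − y)`. -/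
theorem power_inequality_one (p : ℝ) (hp : 1 ≤ p) :
    ∃ C : ℝ, ∀ x y : ℝ, 0 ≤ x → 0 ≤ y →
      (x ^ p - y ^ p) ^ 2 ≤ C * ((x ^ (2 * p - 1) - y ^ (2 * p - 1)) * (x - y)) := by
  refine ⟨p, fun x y hx hy => ?_⟩
  rcases le_total y x with h | h
  · exact power_key p hp x y hy h
  · have := power_key p hp y x hx h
    nlinarith [this]
end
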